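/- For any positive sequence x = (x₁,…,xₙ), positive weights p summing to 1, and real numbers s ∈ ℝ, r > 0, the inequality χ_s(p,x)·χ_{s+r+1}(p,x) ≥ χ_{s+1}(p,x)·χ_{s+r}(p,x) holds, where χ_s(p,x) = (∑pᵢxᵢ^s - (∑pᵢxᵢ)^s)/(s(s-1)) for s ∉ {0,1}, χ_0(p,x) = log(∑pᵢxᵢ) - ∑pᵢ log xᵢ, and χ_1(p,x) = ∑pᵢxᵢ log xᵢ - (∑pᵢxᵢ) log(∑pᵢxᵢ). -/

import Mathlib

/-!
`χ_s` is the Jensen gap of the convex function `φ_s` with `φ_s'' t = t ^ (s - 2)`. Taylor's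
formula with integral remainder around the mean `m = ∑ pᵢ xᵢ` (the linear terms cancel) gives
`χ_s = ∫ W v * v ^ (s - 2) dv` with the nonnegative density `W v = ∑ pᵢ (xᵢ - v)` over those `i`
with `v` between `m` and `xᵢ`, which vanishes off `(0, ∞)`. So `χ_s, χ_{s+1}, χ_{s+r}, χ_{s+r+1}`
are the integrals of `1, v, v ^ r, v ^ (r + 1)` against one positive measure, and the inequality is
Chebyshev's integral inequality for the similarly ordered functions `v` and `v ^ r`.
-/

noncomputable def chi (n : ℕ) (p x : Fin n → ℝ) (s : ℝ) : ℝ :=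
  if s = 0 then Real.log (∑ i, p i * x i) - ∑ i, p i * Real.log (x i)
  else if s = 1 then
    (∑ i, p i * x i * Real.log (x i)) - (∑ i, p i * x i) * Real.log (∑ i, p i * x i)
  else ((∑ i, p i * (x i) ^ s) - (∑ i, p i * x i) ^ s) / (s * (s - 1))

open MeasureTheory Set Real

theorem MonovaryOn.integral_mul_integral_le_integral_mul_integral {α : Type*}
    [MeasurableSpace α] {μ : Measure α} [SFinite μ] {w f g : α → ℝ}
    (hfg : MonovaryOn f g (Function.support w)) (hw : 0 ≤ w) (hw_int : Integrable w μ)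
    (hwf : Integrable (fun x => w x * f x) μ) (hwg : Integrable (fun x => w x * g x) μ)
    (hwfg : Integrable (fun x => w x * f x * g x) μ) :
    (∫ x, w x * f x ∂μ) * (∫ x, w x * g x ∂μ) ≤ (∫ x, w x ∂μ) * ∫ x, w x * f x * g x ∂μ := by
  have hpair : ∀ z : α × α, 0 ≤ w z.1 * w z.2 * ((f z.2 - f z.1) * (g z.2 - g z.1)) := by
    intro ⟨u, v⟩
    by_cases hu : w u = 0
    · simp [hu]
    by_cases hv : w v = 0
    · simp [hv]
    exact mul_nonneg (mul_nonneg (hw u) (hw v)) (hfg.sub_mul_sub_nonneg hu hv)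
  have hexpand : (fun z : α × α => w z.1 * w z.2 * ((f z.2 - f z.1) * (g z.2 - g z.1))) =
      fun z => w z.1 * (w z.2 * f z.2 * g z.2) - (w z.1 * f z.1) * (w z.2 * g z.2)
        - (w z.1 * g z.1) * (w z.2 * f z.2) + (w z.1 * f z.1 * g z.1) * w z.2 := by
    ext; ring
  have h : 0 ≤ ∫ z, w z.1 * w z.2 * ((f z.2 - f z.1) * (g z.2 - g z.1)) ∂μ.prod μ :=
    integral_nonneg hpair
  have hint := (hw_int.mul_prod hwfg).sub (hwf.mul_prod hwg)
  rw [hexpand, integral_add (by exact hint.sub (hwg.mul_prod hwf)) (hwfg.mul_prod hw_int),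
    integral_sub (by exact hint) (hwg.mul_prod hwf),
    integral_sub (hw_int.mul_prod hwfg) (hwf.mul_prod hwg),
    integral_prod_mul w (fun x => w x * f x * g x),
    integral_prod_mul (fun x => w x * f x) (fun x => w x * g x),
    integral_prod_mul (fun x => w x * g x) (fun x => w x * f x),
    integral_prod_mul (fun x => w x * f x * g x) w] at h
  linarith

theorem taylor_integral_remainder_one {f f' f'' : ℝ → ℝ} {a b : ℝ}
    (hf : ∀ t ∈ uIcc a b, HasDerivAt f (f' t) t) (hf' : ∀ t ∈ uIcc a b, HasDerivAt f' (f'' t) t)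
    (hf'' : ContinuousOn f'' (uIcc a b)) :
    f b - f a - f' a * (b - a) = ∫ t in a..b, (b - t) * f'' t := by
  have hF : ∀ t ∈ uIcc a b,
      HasDerivAt (fun t => f t + f' t * (b - t)) ((b - t) * f'' t) t := fun t ht =>
    ((hf t ht).add ((hf' t ht).mul ((hasDerivAt_id t).const_sub b))).congr_deriv (by simp; ring)
  rw [intervalIntegral.integral_eq_sub_of_hasDerivAt hF
    (((continuousOn_const.sub continuousOn_id).mul hf'').intervalIntegrable)]
  ring

lemma continuousOn_rpow_const_uIcc {a b : ℝ} (ha : 0 < a) (hb : 0 < b) (t : ℝ) :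
    ContinuousOn (fun v : ℝ => v ^ t) (uIcc a b) :=
  continuousOn_id.rpow_const fun _ hv => Or.inl (lt_of_lt_of_le (lt_min ha hb) hv.1).ne'

lemma intervalIntegrable_sub_mul_rpow {a b : ℝ} (ha : 0 < a) (hb : 0 < b) (t : ℝ) :
    IntervalIntegrable (fun v => (b - v) * v ^ t) volume a b :=
  ((continuousOn_const.sub continuousOn_id).mul
    (continuousOn_rpow_const_uIcc ha hb t)).intervalIntegrable

/-- `φ_s`, normalised so that `φ_s'' t = t ^ (s - 2)`; `chi n p x s` is its Jensen gap. -/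
noncomputable def phi (s t : ℝ) : ℝ :=
  if s = 0 then -log t else if s = 1 then t * log t else t ^ s / (s * (s - 1))

noncomputable def phiDeriv (s t : ℝ) : ℝ :=
  if s = 0 then -t⁻¹ else if s = 1 then log t + 1 else t ^ (s - 1) / (s - 1)

lemma hasDerivAt_phi (s : ℝ) {t : ℝ} (ht : 0 < t) : HasDerivAt (phi s) (phiDeriv s t) t := by
  unfold phi phiDeriv
  split_ifs with h0 h1
  · exact (hasDerivAt_log ht.ne').neg
  · exact ((hasDerivAt_id' t).mul (hasDerivAt_log ht.ne')).congr_deriv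
      (by rw [mul_inv_cancel₀ ht.ne']; ring)
  · exact ((hasDerivAt_rpow_const (Or.inl ht.ne')).div_const (s * (s - 1))).congr_deriv
      (by field_simp [sub_ne_zero.2 h1])

lemma hasDerivAt_phiDeriv (s : ℝ) {t : ℝ} (ht : 0 < t) :
    HasDerivAt (phiDeriv s) (t ^ (s - 2)) t := by
  unfold phiDeriv
  split_ifs with h0 h1
  · exact (hasDerivAt_inv ht.ne').neg.congr_deriv
      (by rw [h0, zero_sub, rpow_neg ht.le, neg_neg, rpow_two])
  · exact ((hasDerivAt_log ht.ne').add_const 1).congr_deriv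
      (by rw [h1, show (1 : ℝ) - 2 = -1 by norm_num, rpow_neg_one])
  · exact ((hasDerivAt_rpow_const (Or.inl ht.ne')).div_const (s - 1)).congr_deriv
      (by rw [sub_sub, one_add_one_eq_two, mul_div_cancel_left₀ _ (sub_ne_zero.2 h1)])

lemma phi_taylor {a b : ℝ} (ha : 0 < a) (hb : 0 < b) (s : ℝ) :
    phi s b - phi s a - phiDeriv s a * (b - a) = ∫ v in a..b, (b - v) * v ^ (s - 2) :=
  have hpos : ∀ v ∈ uIcc a b, 0 < v := fun _ hv => lt_of_lt_of_le (lt_min ha hb) hv.1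
  taylor_integral_remainder_one (fun v hv => hasDerivAt_phi s (hpos v hv))
    (fun v hv => hasDerivAt_phiDeriv s (hpos v hv)) (continuousOn_rpow_const_uIcc ha hb _)

lemma chi_eq_sum_phi (n : ℕ) (p x : Fin n → ℝ) (s : ℝ) :
    chi n p x s = ∑ i, p i * phi s (x i) - phi s (∑ i, p i * x i) := by
  unfold chi phi
  split_ifs
  · simp only [mul_neg, Finset.sum_neg_distrib]; ring
  · simp only [mul_assoc]
  · rw [sub_div, Finset.sum_div]
    simp only [mul_div_assoc]

lemma chi_eq_sum_integral {n : ℕ} {p x : Fin n → ℝ} (hp1 : ∑ i, p i = 1) (hx : ∀ i, 0 < x i)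
    (hm : 0 < ∑ i, p i * x i) (s : ℝ) :
    chi n p x s = ∑ i, p i * ∫ v in (∑ j, p j * x j)..(x i), (x i - v) * v ^ (s - 2) := by
  simp only [← phi_taylor hm (hx _), mul_sub, Finset.sum_sub_distrib, ← Finset.sum_mul,
    mul_left_comm (p _) (phiDeriv _ _), ← Finset.mul_sum, hp1, chi_eq_sum_phi]
  ring

noncomputable def taylorKernel (a b v : ℝ) : ℝ :=
  (Ioc a b).indicator (fun v => b - v) v - (Ioc b a).indicator (fun v => b - v) v

lemma taylorKernel_nonneg (a b v : ℝ) : 0 ≤ taylorKernel a b v := by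
  unfold taylorKernel
  simp only [indicator_apply, mem_Ioc]
  split_ifs with h₁ h₂ h₂
  · linarith [h₁.1, h₂.2]
  · linarith [h₁.2]
  · linarith [h₂.1]
  · norm_num

lemma min_lt_of_taylorKernel_ne_zero {a b v : ℝ} (h : taylorKernel a b v ≠ 0) : min a b < v := by
  by_contra! hv
  refine h ?_
  rw [taylorKernel, indicator_of_notMem fun h => ?_, indicator_of_notMem fun h => ?_, sub_zero]
  all_goals linarith [h.1, min_le_left a b, min_le_right a b]

lemma taylorKernel_mul (a b v : ℝ) (g : ℝ → ℝ) : taylorKernel a b v * g v =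
    (Ioc a b).indicator (fun v => (b - v) * g v) v
      - (Ioc b a).indicator (fun v => (b - v) * g v) v := by
  simp only [taylorKernel, indicator_apply]
  split_ifs <;> ring

lemma integrable_taylorKernel_mul {a b : ℝ} {g : ℝ → ℝ}
    (hg : IntervalIntegrable (fun v => (b - v) * g v) volume a b) :
    Integrable (fun v => taylorKernel a b v * g v) := by
  simp only [taylorKernel_mul]
  exact (hg.1.integrable_indicator measurableSet_Ioc).sub
    (hg.2.integrable_indicator measurableSet_Ioc)

lemma integral_taylorKernel_mul {a b : ℝ} {g : ℝ → ℝ}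
    (hg : IntervalIntegrable (fun v => (b - v) * g v) volume a b) :
    ∫ v, taylorKernel a b v * g v = ∫ v in a..b, (b - v) * g v := by
  simp only [taylorKernel_mul]
  rw [integral_sub (hg.1.integrable_indicator measurableSet_Ioc)
    (hg.2.integrable_indicator measurableSet_Ioc), integral_indicator measurableSet_Ioc,
    integral_indicator measurableSet_Ioc, intervalIntegral]

noncomputable def chiDensity (n : ℕ) (p x : Fin n → ℝ) (v : ℝ) : ℝ :=
  ∑ i, p i * taylorKernel (∑ j, p j * x j) (x i) v

section chiDensity

variable {n : ℕ} {p x : Fin n → ℝ}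

lemma chiDensity_mul (v c : ℝ) :
    chiDensity n p x v * c = ∑ i, p i * (taylorKernel (∑ j, p j * x j) (x i) v * c) := by
  simp only [chiDensity, Finset.sum_mul, mul_assoc]

lemma pos_of_chiDensity_ne_zero (hx : ∀ i, 0 < x i) (hm : 0 < ∑ i, p i * x i) {v : ℝ}
    (hv : chiDensity n p x v ≠ 0) : 0 < v := by
  obtain ⟨i, -, hi⟩ := Finset.exists_ne_zero_of_sum_ne_zero hv
  exact (le_min hm.le (hx i).le).trans_lt
    (min_lt_of_taylorKernel_ne_zero (right_ne_zero_of_mul hi))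

lemma chiDensity_mul_rpow_nonneg (hp : ∀ i, 0 ≤ p i) (hx : ∀ i, 0 < x i)
    (hm : 0 < ∑ i, p i * x i) (t v : ℝ) : 0 ≤ chiDensity n p x v * v ^ t := by
  by_cases hv : chiDensity n p x v = 0
  · simp [hv]
  exact mul_nonneg (Finset.sum_nonneg fun i _ => mul_nonneg (hp i) (taylorKernel_nonneg _ _ v))
    (rpow_nonneg (pos_of_chiDensity_ne_zero hx hm hv).le t)

lemma chiDensity_mul_rpow_mul_rpow (hx : ∀ i, 0 < x i) (hm : 0 < ∑ i, p i * x i) (a b v : ℝ) :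
    chiDensity n p x v * v ^ a * v ^ b = chiDensity n p x v * v ^ (a + b) := by
  by_cases hv : chiDensity n p x v = 0
  · simp [hv]
  rw [mul_assoc, ← rpow_add (pos_of_chiDensity_ne_zero hx hm hv)]

lemma integrable_chiDensity_mul_rpow (hx : ∀ i, 0 < x i) (hm : 0 < ∑ i, p i * x i) (t : ℝ) :
    Integrable (fun v => chiDensity n p x v * v ^ t) := by
  simp only [chiDensity_mul]
  exact integrable_finsetSum _ fun i _ =>
    (integrable_taylorKernel_mul (intervalIntegrable_sub_mul_rpow hm (hx i) t)).const_mul (p i)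

lemma chi_eq_integral_chiDensity (hp1 : ∑ i, p i = 1) (hx : ∀ i, 0 < x i)
    (hm : 0 < ∑ i, p i * x i) (s : ℝ) :
    chi n p x s = ∫ v, chiDensity n p x v * v ^ (s - 2) := by
  simp only [chiDensity_mul]
  rw [integral_finsetSum _ fun i _ => (integrable_taylorKernel_mul
    (intervalIntegrable_sub_mul_rpow hm (hx i) _)).const_mul (p i), chi_eq_sum_integral hp1 hx hm]
  simp only [integral_const_mul,
    integral_taylorKernel_mul (intervalIntegrable_sub_mul_rpow hm (hx _) _)]

end chiDensity

theorem stmt6 (n : ℕ) (p x : Fin n → ℝ) (hp : ∀ i, 0 < p i) (hp1 : ∑ i, p i = 1)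
    (hx : ∀ i, 0 < x i) (s r : ℝ) (hr : 0 < r) :
    chi n p x (s + 1) * chi n p x (s + r) ≤ chi n p x s * chi n p x (s + r + 1) := by
  have hm : 0 < ∑ i, p i * x i := Finset.sum_pos (fun i _ => mul_pos (hp i) (hx i))
    (Finset.nonempty_of_sum_ne_zero (hp1 ▸ one_ne_zero))
  have hpow := chiDensity_mul_rpow_mul_rpow hx hm
  have hint := integrable_chiDensity_mul_rpow hx hm
  have hmoment (t u : ℝ) (h : t = u - 2) : ∫ v, chiDensity n p x v * v ^ t = chi n p x u :=
    h ▸ (chi_eq_integral_chiDensity hp1 hx hm u).symm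
  have hmono : MonovaryOn (fun v : ℝ => v ^ (1 : ℝ)) (fun v => v ^ r)
      (Function.support fun v => chiDensity n p x v * v ^ (s - 2)) :=
    ((monotoneOn_rpow_Ici_of_exponent_nonneg zero_le_one).monovaryOn
      (monotoneOn_rpow_Ici_of_exponent_nonneg hr.le)).subset fun v hv =>
        (pos_of_chiDensity_ne_zero hx hm (left_ne_zero_of_mul hv)).le
  have key := hmono.integral_mul_integral_le_integral_mul_integral
    (chiDensity_mul_rpow_nonneg (fun i => (hp i).le) hx hm _) (hint _) (by simpa only [hpow] using hint _)
    (by simpa only [hpow] using hint _) (by simpa only [hpow] using hint _)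
  simp only [hpow] at key
  rwa [hmoment (s - 2) s rfl, hmoment (s - 2 + 1) (s + 1) (by ring),
    hmoment (s - 2 + r) (s + r) (by ring), hmoment (s - 2 + 1 + r) (s + r + 1) (by ring)] at key
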